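/- Let ε > 0 and w ∈ ℂ with 2ε < |w|. Then for every θ ∈ ℝ: (1/(2π))·∫₀^{2π} ∫₀¹ [ log|1 + ε·(e^{iθ} + l·e^{iη})/w| − ε·Re((e^{iθ} + l·e^{iη})/w) ]·l dl dη = Σ_{k=2}^∞ ((−1)^{k+1}/(2k))·ε^k·Re(e^{ikθ}/w^k), where the series on the right-hand side converges absolutely (its k-th term is bounded by 2^{−k}). -/

import Mathlib

/-- The `k`-th term of the series expansion of the interaction potential of a unit
disc patch with a distant vortex at (rescaled) distance `w`. -/
noncomputable def vterm (ε : ℝ) (w : ℂ) (θ : ℝ) (k : ℕ) : ℝ :=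
  ((-1 : ℝ) ^ (k + 1) / (2 * k)) * ε ^ k *
    (Complex.exp ((k : ℂ) * (θ : ℂ) * Complex.I) / w ^ k).re

open MeasureTheory intervalIntegral Complex Finset in
private lemma aux_eta (D : ℂ) (p : ℕ) (hp : 0 < p) :
    ∫ η in (0:ℝ)..(2 * Real.pi), (D * Complex.exp ((η : ℂ) * Complex.I) ^ p).re = 0 := by
  have h1 : ∀ η : ℝ, D * Complex.exp ((η:ℂ) * Complex.I) ^ p
      = D * Complex.exp (((p : ℂ) * Complex.I) * (η : ℂ)) := fun η => by
    rw [← Complex.exp_nat_mul,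
      show ((p:ℂ)) * ((η:ℂ) * Complex.I) = ((p:ℂ) * Complex.I) * (η:ℂ) by ring]
  simp_rw [h1]
  have hc : Continuous fun η : ℝ => D * Complex.exp (((p:ℂ) * Complex.I) * (η:ℂ)) := by fun_prop
  have hInt := hc.intervalIntegrable (μ := volume) (0:ℝ) (2*Real.pi)
  have h2 := Complex.reCLM.intervalIntegral_comp_comm hInt
  have h3 : (∫ η in (0:ℝ)..(2*Real.pi), D * Complex.exp (((p:ℂ)*Complex.I) * (η:ℂ))) = 0 := by
    have hc0 : ((p:ℂ) * Complex.I) ≠ 0 :=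
      mul_ne_zero (Nat.cast_ne_zero.mpr hp.ne') Complex.I_ne_zero
    rw [intervalIntegral.integral_const_mul, integral_exp_mul_complex hc0]
    have he : Complex.exp ((p:ℂ)*Complex.I*(2*(Real.pi:ℂ))) = 1 := by
      rw [show ((p:ℂ)*Complex.I*(2*(Real.pi:ℂ))) = (p:ℂ) * (2*(Real.pi:ℂ)*Complex.I) by ring,
        Complex.exp_nat_mul, Complex.exp_two_pi_mul_I, one_pow]
    push_cast
    rw [he]
    simp
  simp only [← Complex.reCLM_apply] at *
  rw [h2, h3]
  simp

open MeasureTheory intervalIntegral Complex Finset in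
private lemma aux_l (C a e vw : ℂ) (m : ℕ) :
    ∫ l in (0:ℝ)..1, (C * (vw * (a + (l:ℂ) * e)) ^ m).re * l
      = ∑ j ∈ Finset.range (m+1),
          (C * vw ^ m * a ^ j * ((m.choose j : ℕ) : ℂ) * e ^ (m - j)).re
            / (((m - j : ℕ) : ℝ) + 2) := by
  have key : ∀ l : ℝ, (C * (vw * (a + (l:ℂ)*e))^m).re * l
      = ∑ j ∈ Finset.range (m+1),
          (C * vw^m * a^j * ((m.choose j : ℕ):ℂ) * e^(m-j)).re * l^((m-j)+1) := by
    intro l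
    have h1 : C * (vw * (a + (l:ℂ)*e))^m
        = ∑ j ∈ Finset.range (m+1),
            (C * vw^m * a^j * ((m.choose j : ℕ):ℂ) * e^(m-j)) * ((l ^ (m-j) : ℝ) : ℂ) := by
      rw [mul_pow, add_pow, Finset.mul_sum, Finset.mul_sum]
      refine Finset.sum_congr rfl fun j hj => ?_
      rw [mul_pow, Complex.ofReal_pow]
      ring
    rw [h1, Complex.re_sum, Finset.sum_mul]
    refine Finset.sum_congr rfl fun j hj => ?_
    rw [mul_comm _ (((l ^ (m-j) : ℝ) : ℂ)), Complex.re_ofReal_mul, pow_succ]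
    ring
  rw [intervalIntegral.integral_congr (fun l _ => key l)]
  rw [intervalIntegral.integral_finset_sum
    (fun j _ => (Continuous.intervalIntegrable (by fun_prop) _ _))]
  refine Finset.sum_congr rfl fun j hj => ?_
  rw [intervalIntegral.integral_const_mul, integral_pow]
  push_cast
  norm_num
  ring

open MeasureTheory intervalIntegral Complex Finset in
private lemma aux_eta_sum (C a vw : ℂ) (m : ℕ) :
    (∫ η in (0:ℝ)..(2*Real.pi), ∑ j ∈ Finset.range (m+1),
        (C * vw^m * a^j * ((m.choose j : ℕ):ℂ) * Complex.exp ((η:ℂ)*Complex.I)^(m-j)).re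
          / (((m - j : ℕ):ℝ) + 2))
      = Real.pi * (C * vw^m * a^m).re := by
  rw [intervalIntegral.integral_finset_sum
    (fun j _ => (Continuous.intervalIntegrable (by fun_prop) _ _))]
  rw [Finset.sum_range_succ]
  have h0 : ∀ j ∈ Finset.range m, (∫ η in (0:ℝ)..(2*Real.pi),
      (C*vw^m*a^j*((m.choose j : ℕ):ℂ)*Complex.exp ((η:ℂ)*Complex.I)^(m-j)).re
        / (((m-j:ℕ):ℝ)+2)) = 0 := by
    intro j hj
    have hj' : 0 < m - j := by
      have := Finset.mem_range.mp hj; omega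
    rw [intervalIntegral.integral_div, aux_eta _ _ hj', zero_div]
  rw [Finset.sum_eq_zero h0, zero_add]
  simp only [Nat.sub_self, pow_zero, mul_one, Nat.choose_self, Nat.cast_one, Nat.cast_zero]
  rw [intervalIntegral.integral_div, intervalIntegral.integral_const]
  simp only [sub_zero, smul_eq_mul]
  ring

set_option maxHeartbeats 1000000 in
/-- Series expansion of the interaction potential of a unit disc patch with a
distant vortex. -/
theorem stmt_12 (ε : ℝ) (hε : 0 < ε) (w : ℂ) (hw : 2 * ε < ‖w‖) (θ : ℝ) :
    Summable (fun k : ℕ => |vterm ε w θ (k + 2)|) ∧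
    (∀ k : ℕ, 2 ≤ k → |vterm ε w θ k| ≤ (1 / 2 : ℝ) ^ k) ∧
    (1 / (2 * Real.pi)) * ∫ η in (0 : ℝ)..(2 * Real.pi), ∫ l in (0 : ℝ)..1,
        (Real.log (‖(1 + (ε : ℂ) *
            (Complex.exp ((θ : ℂ) * Complex.I) + (l : ℂ) * Complex.exp ((η : ℂ) * Complex.I)) / w)‖)
          - ε * ((Complex.exp ((θ : ℂ) * Complex.I)
            + (l : ℂ) * Complex.exp ((η : ℂ) * Complex.I)) / w).re) * l
      = ∑' k : ℕ, vterm ε w θ (k + 2) := by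
  have hπ : (0:ℝ) < Real.pi := Real.pi_pos
  have hw0 : (0:ℝ) < ‖w‖ := lt_trans (by linarith) hw
  have hwne : w ≠ 0 := by
    intro h; rw [h] at hw0; simp at hw0
  set r : ℝ := 2 * ε / ‖w‖ with hrdef
  have hr0 : (0:ℝ) ≤ r := by positivity
  have hr1 : r < 1 := (div_lt_one hw0).mpr hw
  -- Part 2: the bound on |vterm|
  have part2 : ∀ k : ℕ, 2 ≤ k → |vterm ε w θ k| ≤ (1/2:ℝ)^k := by
    intro k hk
    have hk0 : (0:ℝ) < (k:ℝ) := by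
      have : 0 < k := by omega
      exact_mod_cast this
    have hexp1 : ‖(Complex.exp ((k:ℂ)*(θ:ℂ)*Complex.I))‖ = 1 := by
      rw [show ((k:ℂ)*(θ:ℂ)*Complex.I) = (((k*θ:ℝ)):ℂ)*Complex.I by push_cast; ring]
      exact Complex.norm_exp_ofReal_mul_I _
    have habsre : |(Complex.exp ((k:ℂ)*(θ:ℂ)*Complex.I) / w^k).re| ≤ 1 / (‖w‖)^k := by
      refine (Complex.abs_re_le_norm _).trans ?_
      rw [norm_div, norm_pow, hexp1]
    have hveq : |vterm ε w θ k|
        = (1/(2*(k:ℝ))) * ε^k * |(Complex.exp ((k:ℂ)*(θ:ℂ)*Complex.I) / w^k).re| := by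
      rw [vterm, abs_mul, abs_mul, abs_div, abs_pow, abs_neg, abs_one, one_pow,
        abs_pow, abs_of_pos hε, abs_of_pos (by positivity : (0:ℝ) < 2*(k:ℝ))]
    have hεw : ε / ‖w‖ ≤ 1/2 := by
      rw [div_le_div_iff₀ hw0 (by norm_num : (0:ℝ) < 2)]
      linarith
    calc |vterm ε w θ k|
        ≤ (1/(2*(k:ℝ))) * ε^k * (1/(‖w‖)^k) := by
          rw [hveq]; gcongr
      _ = (1/(2*(k:ℝ))) * (ε/‖w‖)^k := by
          rw [div_pow]; ring
      _ ≤ 1 * (1/2:ℝ)^k := by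
          have h1 : (1/(2*(k:ℝ))) ≤ 1 := by
            rw [div_le_one (by positivity)]
            have : (2:ℝ) ≤ (k:ℝ) := by exact_mod_cast hk
            linarith
          have h2 : (ε/‖w‖)^k ≤ (1/2:ℝ)^k :=
            pow_le_pow_left₀ (by positivity) hεw k
          exact mul_le_mul h1 h2 (by positivity) one_pos.le
      _ = (1/2:ℝ)^k := one_mul _
  -- Part 1: summability
  have part1 : Summable (fun k : ℕ => |vterm ε w θ (k + 2)|) := by
    refine Summable.of_nonneg_of_le (fun k => abs_nonneg _)
      (fun k => part2 (k+2) (by omega)) ?_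
    have := (summable_geometric_of_lt_one (by norm_num : (0:ℝ) ≤ 1/2)
      (by norm_num : (1/2:ℝ) < 1)).mul_right ((1/2:ℝ)^2)
    simpa [pow_add] using this
  refine ⟨part1, part2, ?_⟩
  -- the terms of the series, as functions of (η, l)
  set F : ℕ → ℝ → ℝ → ℝ := fun k η l =>
    ((-1:ℂ)^(k+2+1) * ((ε:ℂ) * (Complex.exp ((θ:ℂ)*Complex.I)
      + (l:ℂ)*Complex.exp ((η:ℂ)*Complex.I)) / w)^(k+2) / ((k+2:ℕ):ℂ)).re * l with hF
  have hFcont : ∀ k, Continuous (fun p : ℝ × ℝ => F k p.1 p.2) := by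
    intro k
    rw [hF]
    refine Continuous.mul (Complex.continuous_re.comp ?_) continuous_snd
    refine Continuous.div_const (continuous_const.mul (Continuous.pow ?_ _)) _
    refine Continuous.div_const (continuous_const.mul ?_) _
    exact continuous_const.add ((Complex.continuous_ofReal.comp continuous_snd).mul
      (Complex.continuous_exp.comp
        ((Complex.continuous_ofReal.comp continuous_fst).mul continuous_const)))
  -- bound on |z|
  have hzle : ∀ η : ℝ, ∀ l ∈ Set.Icc (0:ℝ) 1,
      ‖((ε:ℂ) * (Complex.exp ((θ:ℂ)*Complex.I)
        + (l:ℂ)*Complex.exp ((η:ℂ)*Complex.I)) / w)‖ ≤ r := by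
    intro η l hl
    have h2 : ‖(Complex.exp ((θ:ℂ)*Complex.I)
        + (l:ℂ)*Complex.exp ((η:ℂ)*Complex.I))‖ ≤ 2 := by
      refine (norm_add_le _ _).trans ?_
      rw [norm_mul, Complex.norm_real, Real.norm_eq_abs, Complex.norm_exp_ofReal_mul_I,
        Complex.norm_exp_ofReal_mul_I, abs_of_nonneg hl.1, mul_one]
      linarith [hl.2]
    rw [norm_div, norm_mul, Complex.norm_real, Real.norm_eq_abs, abs_of_pos hε, hrdef,
      show (2*ε) = ε*2 by ring]
    gcongr
  -- pointwise convergence of the series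
  have hpt : ∀ η : ℝ, ∀ l ∈ Set.Icc (0:ℝ) 1,
      HasSum (fun k => F k η l)
        ((Real.log (‖(1 + (ε:ℂ) * (Complex.exp ((θ:ℂ)*Complex.I)
            + (l:ℂ)*Complex.exp ((η:ℂ)*Complex.I)) / w)‖)
          - ε * ((Complex.exp ((θ:ℂ)*Complex.I)
            + (l:ℂ)*Complex.exp ((η:ℂ)*Complex.I)) / w).re) * l) := by
    intro η l hl
    have hz1 : ‖(ε:ℂ) * (Complex.exp ((θ:ℂ)*Complex.I)
        + (l:ℂ)*Complex.exp ((η:ℂ)*Complex.I)) / w‖ < 1 := by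
      exact lt_of_le_of_lt (hzle η l hl) hr1
    have H := Complex.hasSum_taylorSeries_log hz1
    have H2 := (hasSum_nat_add_iff' 2).mpr H
    have hsum2 : (∑ i ∈ Finset.range 2, (-1:ℂ)^(i+1)
        * ((ε:ℂ) * (Complex.exp ((θ:ℂ)*Complex.I)
          + (l:ℂ)*Complex.exp ((η:ℂ)*Complex.I)) / w)^i / (i:ℂ))
        = (ε:ℂ) * (Complex.exp ((θ:ℂ)*Complex.I)
          + (l:ℂ)*Complex.exp ((η:ℂ)*Complex.I)) / w := by
      simp [Finset.sum_range_succ]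
    rw [hsum2] at H2
    have H3 := Complex.hasSum_re H2
    have H4 := H3.mul_right l
    have heq : (Complex.log (1 + (ε:ℂ) * (Complex.exp ((θ:ℂ)*Complex.I)
          + (l:ℂ)*Complex.exp ((η:ℂ)*Complex.I)) / w)
        - (ε:ℂ) * (Complex.exp ((θ:ℂ)*Complex.I)
          + (l:ℂ)*Complex.exp ((η:ℂ)*Complex.I)) / w).re
        = Real.log (‖(1 + (ε:ℂ) * (Complex.exp ((θ:ℂ)*Complex.I)
            + (l:ℂ)*Complex.exp ((η:ℂ)*Complex.I)) / w)‖)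
          - ε * ((Complex.exp ((θ:ℂ)*Complex.I)
            + (l:ℂ)*Complex.exp ((η:ℂ)*Complex.I)) / w).re := by
      rw [Complex.sub_re, Complex.log_re, mul_div_assoc, Complex.re_ofReal_mul]
    rw [heq] at H4
    exact H4
  -- uniform bound for the terms
  have hFbound : ∀ k : ℕ, ∀ η : ℝ, ∀ l ∈ Set.Icc (0:ℝ) 1, ‖F k η l‖ ≤ r^(k+2) := by
    intro k η l hl
    rw [hF, Real.norm_eq_abs, abs_mul]
    have h1 : |((-1:ℂ)^(k+2+1) * ((ε:ℂ) * (Complex.exp ((θ:ℂ)*Complex.I)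
        + (l:ℂ)*Complex.exp ((η:ℂ)*Complex.I)) / w)^(k+2) / ((k+2:ℕ):ℂ)).re| ≤ r^(k+2) := by
      refine (Complex.abs_re_le_norm _).trans ?_
      rw [norm_div, norm_mul, norm_pow, norm_pow]
      simp only [norm_neg, norm_one, one_pow, one_mul, Complex.norm_natCast]
      calc ‖((ε:ℂ) * (Complex.exp ((θ:ℂ)*Complex.I)
            + (l:ℂ)*Complex.exp ((η:ℂ)*Complex.I)) / w)‖^(k+2) / ((k+2:ℕ):ℝ)
          ≤ r^(k+2) / 1 :=
            div_le_div₀ (pow_nonneg hr0 _)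
              (pow_le_pow_left₀ (norm_nonneg _) (hzle η l hl) _) one_pos
              (by push_cast; linarith [Nat.cast_nonneg (α := ℝ) k])
        _ = r^(k+2) := div_one _
    calc |((-1:ℂ)^(k+2+1) * ((ε:ℂ) * (Complex.exp ((θ:ℂ)*Complex.I)
          + (l:ℂ)*Complex.exp ((η:ℂ)*Complex.I)) / w)^(k+2) / ((k+2:ℕ):ℂ)).re| * |l|
        ≤ r^(k+2) * 1 := by
          refine mul_le_mul h1 ?_ (abs_nonneg l) (pow_nonneg hr0 _)
          rw [abs_of_nonneg hl.1]; exact hl.2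
      _ = r^(k+2) := mul_one _
  have hsumr : Summable (fun k : ℕ => r^(k+2)) := by
    have := (summable_geometric_of_lt_one hr0 hr1).mul_right (r^2)
    simpa [pow_add] using this
  have hmemIcc : ∀ l ∈ Set.uIoc (0:ℝ) 1, l ∈ Set.Icc (0:ℝ) 1 := by
    intro l hl
    rw [Set.uIoc_of_le (by norm_num : (0:ℝ) ≤ 1)] at hl
    exact ⟨hl.1.le, hl.2⟩
  -- inner sums
  have hinner : ∀ η : ℝ, HasSum (fun k => ∫ l in (0:ℝ)..1, F k η l)
      (∫ l in (0:ℝ)..1,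
        (Real.log (‖(1 + (ε:ℂ) * (Complex.exp ((θ:ℂ)*Complex.I)
            + (l:ℂ)*Complex.exp ((η:ℂ)*Complex.I)) / w)‖)
          - ε * ((Complex.exp ((θ:ℂ)*Complex.I)
            + (l:ℂ)*Complex.exp ((η:ℂ)*Complex.I)) / w).re) * l) := by
    intro η
    refine intervalIntegral.hasSum_integral_of_dominated_convergence
      (bound := fun k (_ : ℝ) => r^(k+2)) (fun k => ?_) (fun k => ?_) ?_ ?_ ?_
    · exact ((hFcont k).comp (continuous_const.prodMk continuous_id)).aestronglyMeasurable
    · filter_upwards with l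
      exact fun hl => hFbound k η l (hmemIcc l hl)
    · filter_upwards with l
      exact fun _ => hsumr
    · exact intervalIntegrable_const
    · filter_upwards with l
      exact fun hl => hpt η l (hmemIcc l hl)
  have hGcont : ∀ k, Continuous (fun η => ∫ l in (0:ℝ)..1, F k η l) := by
    intro k
    apply intervalIntegral.continuous_parametric_intervalIntegral_of_continuous'
      (f := fun η l => F k η l)
    rw [Function.uncurry_def]
    exact hFcont k
  have hGbound : ∀ (k : ℕ) (η : ℝ), ‖∫ l in (0:ℝ)..1, F k η l‖ ≤ r^(k+2) := by
    intro k η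
    have h := intervalIntegral.norm_integral_le_of_norm_le_const
      (C := r^(k+2)) (f := fun l => F k η l) (a := (0:ℝ)) (b := 1)
      (fun l hl => hFbound k η l (hmemIcc l hl))
    simpa using h
  have houter : HasSum (fun k => ∫ η in (0:ℝ)..(2*Real.pi), ∫ l in (0:ℝ)..1, F k η l)
      (∫ η in (0:ℝ)..(2*Real.pi), ∫ l in (0:ℝ)..1,
        (Real.log (‖(1 + (ε:ℂ) * (Complex.exp ((θ:ℂ)*Complex.I)
            + (l:ℂ)*Complex.exp ((η:ℂ)*Complex.I)) / w)‖)
          - ε * ((Complex.exp ((θ:ℂ)*Complex.I)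
            + (l:ℂ)*Complex.exp ((η:ℂ)*Complex.I)) / w).re) * l) := by
    refine intervalIntegral.hasSum_integral_of_dominated_convergence
      (bound := fun k (_ : ℝ) => r^(k+2)) (fun k => (hGcont k).aestronglyMeasurable)
      (fun k => ?_) ?_ intervalIntegrable_const ?_
    · filter_upwards with η
      exact fun _ => hGbound k η
    · filter_upwards with η
      exact fun _ => hsumr
    · filter_upwards with η
      exact fun _ => hinner η
  -- evaluation of each term
  have hterm : ∀ k : ℕ, (∫ η in (0:ℝ)..(2*Real.pi), ∫ l in (0:ℝ)..1, F k η l)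
      = 2 * Real.pi * vterm ε w θ (k+2) := by
    intro k
    have hstep1 : ∀ η : ℝ, (∫ l in (0:ℝ)..1, F k η l)
        = ∑ j ∈ Finset.range (k+2+1),
            (((-1:ℂ)^(k+2+1)/((k+2:ℕ):ℂ)) * ((ε:ℂ)/w)^(k+2)
              * (Complex.exp ((θ:ℂ)*Complex.I))^j * (((k+2).choose j : ℕ):ℂ)
              * (Complex.exp ((η:ℂ)*Complex.I))^(k+2-j)).re
            / (((k+2-j : ℕ):ℝ) + 2) := by
      intro η
      rw [← aux_l (((-1:ℂ)^(k+2+1))/((k+2:ℕ):ℂ)) (Complex.exp ((θ:ℂ)*Complex.I))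
        (Complex.exp ((η:ℂ)*Complex.I)) ((ε:ℂ)/w) (k+2)]
      apply intervalIntegral.integral_congr
      intro l _
      simp only [hF]
      have harg : (-1:ℂ)^(k+2+1) * ((ε:ℂ) * (Complex.exp ((θ:ℂ)*Complex.I)
            + (l:ℂ)*Complex.exp ((η:ℂ)*Complex.I)) / w)^(k+2) / ((k+2:ℕ):ℂ)
          = (((-1:ℂ)^(k+2+1))/((k+2:ℕ):ℂ)) * (((ε:ℂ)/w) * (Complex.exp ((θ:ℂ)*Complex.I)
            + (l:ℂ)*Complex.exp ((η:ℂ)*Complex.I)))^(k+2) := by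
        rw [div_pow, mul_pow, mul_pow, div_pow]
        ring
      rw [harg]
    have hstep2 : (∫ η in (0:ℝ)..(2*Real.pi), ∫ l in (0:ℝ)..1, F k η l)
        = ∫ η in (0:ℝ)..(2*Real.pi), ∑ j ∈ Finset.range (k+2+1),
            (((-1:ℂ)^(k+2+1)/((k+2:ℕ):ℂ)) * ((ε:ℂ)/w)^(k+2)
              * (Complex.exp ((θ:ℂ)*Complex.I))^j * (((k+2).choose j : ℕ):ℂ)
              * (Complex.exp ((η:ℂ)*Complex.I))^(k+2-j)).re
            / (((k+2-j : ℕ):ℝ) + 2) :=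
      intervalIntegral.integral_congr (fun η _ => hstep1 η)
    rw [hstep2, aux_eta_sum]
    -- now: π * (C * vw^m * a^m).re = 2π * vterm ... (k+2)
    have h1 : ((-1:ℂ)^(k+2+1)/((k+2:ℕ):ℂ)) * ((ε:ℂ)/w)^(k+2)
        * (Complex.exp ((θ:ℂ)*Complex.I))^(k+2)
        = ((((-1:ℝ)^(k+2+1)/((k+2:ℕ):ℝ)) * ε^(k+2) : ℝ) : ℂ)
          * (Complex.exp (((k+2:ℕ):ℂ)*(θ:ℂ)*Complex.I) / w^(k+2)) := by
      rw [mul_assoc (((k+2:ℕ):ℂ)) ((θ:ℂ)) Complex.I, ← Complex.exp_nat_mul, div_pow]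
      push_cast
      ring
    rw [h1, Complex.re_ofReal_mul, vterm]
    have hkne : ((k+2:ℕ):ℝ) ≠ 0 := by positivity
    push_cast
    field_simp
  simp_rw [hterm] at houter
  have hfinal := houter.mul_left (1/(2*Real.pi))
  have hsimp : (fun k : ℕ => (1/(2*Real.pi)) * (2*Real.pi * vterm ε w θ (k+2)))
      = fun k : ℕ => vterm ε w θ (k+2) := by
    funext k
    field_simp
  rw [hsimp] at hfinal
  exact hfinal.tsum_eq.symm
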